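/- arXiv:2405.10754 — 5 statements merged into one kernel-verified Lean document; each statement's English description precedes it below -/
import Mathlib

section
/- For every real number L with L ≥ (1/m) Σ_{r=1}^m ‖a_r‖²(3‖a_r‖² + ‖ε‖_∞), and for all x, z ∈ ℝⁿ, one has D_f(x,z) ≤ L · D_ψ(x,z); that is, f is L-relatively smooth with respect to the entropy ψ. -/
/-!
Each summand of `f` is, up to a constant, `s ↦ (s² - c)² / 4` evaluated at `s = ⟪a_r, x⟫`, so
`D_f(x, z)` is an average of scalar Bregman divergences of quartics. Writing `s = ⟪a, x⟫`,
`t = ⟪a, z⟫`, such a divergence equals `(s + t)²(s - t)²/4 + t²(s - t)²/2 - c(s - t)²/2`;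
Cauchy–Schwarz turns the inner products into norms, and the parallelogram law reduces the
comparison with `D_ψ(x, z) = (‖x‖² - ‖z‖²)²/4 + (‖z‖² + 1)‖x - z‖²/2` to the positivity of the
quadratic form `2d² + (d - w)²` in `d = ‖x‖² - ‖z‖²` and `w = ‖x - z‖²`.
-/

open scoped RealInnerProductSpace BigOperators

noncomputable def phaseObj (m n : ℕ) (a : Fin m → EuclideanSpace ℝ (Fin n))
    (xbar : EuclideanSpace ℝ (Fin n)) (ε : Fin m → ℝ)
    (x : EuclideanSpace ℝ (Fin n)) : ℝ :=
  (1 / (4 * (m : ℝ))) * ∑ r, (⟪a r, x⟫ ^ 2 - ⟪a r, xbar⟫ ^ 2) ^ 2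
    - (1 / (2 * (m : ℝ))) * ∑ r, ε r * (⟪a r, x⟫ ^ 2 - ⟪a r, xbar⟫ ^ 2)
    + (∑ r, ε r ^ 2) / (4 * (m : ℝ))

noncomputable def phaseGrad (m n : ℕ) (a : Fin m → EuclideanSpace ℝ (Fin n))
    (xbar : EuclideanSpace ℝ (Fin n)) (ε : Fin m → ℝ)
    (x : EuclideanSpace ℝ (Fin n)) : EuclideanSpace ℝ (Fin n) :=
  (1 / (m : ℝ)) • ∑ r, ((⟪a r, x⟫ ^ 2 - ⟪a r, xbar⟫ ^ 2 - ε r) * ⟪a r, x⟫) • a r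

noncomputable def entropy (n : ℕ) (x : EuclideanSpace ℝ (Fin n)) : ℝ :=
  (1 / 4) * ‖x‖ ^ 4 + (1 / 2) * ‖x‖ ^ 2

noncomputable def entropyGrad (n : ℕ) (x : EuclideanSpace ℝ (Fin n)) :
    EuclideanSpace ℝ (Fin n) :=
  (‖x‖ ^ 2 + 1) • x

/-- Bregman divergence of the noisy phase-retrieval objective `f`. -/
noncomputable def Df (m n : ℕ) (a : Fin m → EuclideanSpace ℝ (Fin n))
    (xbar : EuclideanSpace ℝ (Fin n)) (ε : Fin m → ℝ)
    (x z : EuclideanSpace ℝ (Fin n)) : ℝ :=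
  phaseObj m n a xbar ε x - phaseObj m n a xbar ε z - ⟪phaseGrad m n a xbar ε z, x - z⟫

/-- Bregman divergence of the entropy `ψ`. -/
noncomputable def Dψ (n : ℕ) (x z : EuclideanSpace ℝ (Fin n)) : ℝ :=
  entropy n x - entropy n z - ⟪entropyGrad n z, x - z⟫

noncomputable def quarticBregman (c s t : ℝ) : ℝ :=
  (s ^ 2 - c) ^ 2 / 4 - (t ^ 2 - c) ^ 2 / 4 - (t ^ 2 - c) * t * (s - t)

lemma quarticBregman_eq (c s t : ℝ) :
    quarticBregman c s t
      = (s + t) ^ 2 * (s - t) ^ 2 / 4 + t ^ 2 * (s - t) ^ 2 / 2 - c * (s - t) ^ 2 / 2 := by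
  unfold quarticBregman
  ring

lemma quarticBregman_add_le {β e E : ℝ} (hβ : 0 ≤ β) (he : |e| ≤ E) (s t : ℝ) :
    quarticBregman (β + e) s t
      ≤ (s + t) ^ 2 * (s - t) ^ 2 / 4 + t ^ 2 * (s - t) ^ 2 / 2 + E * (s - t) ^ 2 / 2 := by
  rw [quarticBregman_eq]
  have : -(β + e) ≤ E := by linarith [neg_abs_le e]
  nlinarith [sq_nonneg (s - t)]

section InnerProductSpace

variable {F : Type*} [NormedAddCommGroup F] [InnerProductSpace ℝ F]

lemma sq_real_inner_le (x y : F) : ⟪x, y⟫ ^ 2 ≤ ‖x‖ ^ 2 * ‖y‖ ^ 2 := by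
  simpa [mul_pow, sq_abs] using pow_le_pow_left₀ (abs_nonneg _) (abs_real_inner_le_norm x y) 2

lemma norm_add_sq_mul_norm_sub_sq_le (x z : F) :
    ‖x + z‖ ^ 2 * ‖x - z‖ ^ 2 ≤ 3 * (‖x‖ ^ 2 - ‖z‖ ^ 2) ^ 2 + 4 * ‖z‖ ^ 2 * ‖x - z‖ ^ 2 := by
  have parallelogram : ‖x + z‖ ^ 2 = 2 * ‖x‖ ^ 2 + 2 * ‖z‖ ^ 2 - ‖x - z‖ ^ 2 := by
    rw [norm_add_sq_real, norm_sub_sq_real]; ring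
  rw [parallelogram]
  nlinarith [sq_nonneg (‖x‖ ^ 2 - ‖z‖ ^ 2), sq_nonneg (‖x‖ ^ 2 - ‖z‖ ^ 2 - ‖x - z‖ ^ 2)]

lemma quarticBregman_inner_le {β e E : ℝ} (hβ : 0 ≤ β) (he : |e| ≤ E) (a x z : F) :
    quarticBregman (β + e) ⟪a, x⟫ ⟪a, z⟫
      ≤ ‖a‖ ^ 2 * (3 * ‖a‖ ^ 2 + E)
        * ((‖x‖ ^ 2 - ‖z‖ ^ 2) ^ 2 / 4 + (‖z‖ ^ 2 + 1) * ‖x - z‖ ^ 2 / 2) := by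
  have hE : 0 ≤ E := (abs_nonneg e).trans he
  have hsum := sq_real_inner_le a (x + z)
  have hdiff := sq_real_inner_le a (x - z)
  have hz := sq_real_inner_le a z
  calc quarticBregman (β + e) ⟪a, x⟫ ⟪a, z⟫
      ≤ ⟪a, x + z⟫ ^ 2 * ⟪a, x - z⟫ ^ 2 / 4 + ⟪a, z⟫ ^ 2 * ⟪a, x - z⟫ ^ 2 / 2
          + E * ⟪a, x - z⟫ ^ 2 / 2 := by
        simpa only [inner_add_right, inner_sub_right] using quarticBregman_add_le hβ he _ _
    _ ≤ (‖a‖ ^ 2 * ‖x + z‖ ^ 2) * (‖a‖ ^ 2 * ‖x - z‖ ^ 2) / 4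
          + (‖a‖ ^ 2 * ‖z‖ ^ 2) * (‖a‖ ^ 2 * ‖x - z‖ ^ 2) / 2
          + E * (‖a‖ ^ 2 * ‖x - z‖ ^ 2) / 2 := by gcongr
    _ = (‖a‖ ^ 2) ^ 2 * (‖x + z‖ ^ 2 * ‖x - z‖ ^ 2 / 4 + ‖z‖ ^ 2 * ‖x - z‖ ^ 2 / 2)
          + ‖a‖ ^ 2 * E * (‖x - z‖ ^ 2 / 2) := by ring
    _ ≤ (‖a‖ ^ 2) ^ 2 * (3 * ((‖x‖ ^ 2 - ‖z‖ ^ 2) ^ 2 / 4 + (‖z‖ ^ 2 + 1) * ‖x - z‖ ^ 2 / 2))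
          + ‖a‖ ^ 2 * E * ((‖x‖ ^ 2 - ‖z‖ ^ 2) ^ 2 / 4 + (‖z‖ ^ 2 + 1) * ‖x - z‖ ^ 2 / 2) := by
        gcongr
        · nlinarith [norm_add_sq_mul_norm_sub_sq_le x z, sq_nonneg ‖x - z‖]
        · nlinarith [sq_nonneg (‖x‖ ^ 2 - ‖z‖ ^ 2), sq_nonneg ‖z‖, sq_nonneg ‖x - z‖]
    _ = _ := by ring

end InnerProductSpace

lemma Dψ_eq (n : ℕ) (x z : EuclideanSpace ℝ (Fin n)) :
    Dψ n x z = (‖x‖ ^ 2 - ‖z‖ ^ 2) ^ 2 / 4 + (‖z‖ ^ 2 + 1) * ‖x - z‖ ^ 2 / 2 := by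
  rw [norm_sub_sq_real]
  simp only [Dψ, entropy, entropyGrad, real_inner_smul_left, inner_sub_right,
    real_inner_self_eq_norm_sq, real_inner_comm x z]
  ring

lemma Dψ_nonneg (n : ℕ) (x z : EuclideanSpace ℝ (Fin n)) : 0 ≤ Dψ n x z := by
  rw [Dψ_eq]
  positivity

lemma Df_eq (m n : ℕ) (a : Fin m → EuclideanSpace ℝ (Fin n))
    (xbar : EuclideanSpace ℝ (Fin n)) (ε : Fin m → ℝ) (x z : EuclideanSpace ℝ (Fin n)) :
    Df m n a xbar ε x z
      = (1 / (m : ℝ)) * ∑ r, quarticBregman (⟪a r, xbar⟫ ^ 2 + ε r) ⟪a r, x⟫ ⟪a r, z⟫ := by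
  simp only [Df, phaseObj, phaseGrad, quarticBregman, real_inner_smul_left, sum_inner,
    inner_sub_right, Finset.mul_sum, Finset.sum_div, ← Finset.sum_sub_distrib,
    ← Finset.sum_add_distrib]
  refine Finset.sum_congr rfl fun r _ => ?_
  ring

theorem stmt0_general (n m : ℕ) (a : Fin m → EuclideanSpace ℝ (Fin n))
    (xbar : EuclideanSpace ℝ (Fin n)) (ε : Fin m → ℝ) (L : ℝ)
    (hL : L ≥ (1 / (m : ℝ)) * ∑ r, ‖a r‖ ^ 2 * (3 * ‖a r‖ ^ 2 + ⨆ s, |ε s|)) :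
    ∀ x z : EuclideanSpace ℝ (Fin n), Df m n a xbar ε x z ≤ L * Dψ n x z := by
  intro x z
  have hε (r : Fin m) : |ε r| ≤ ⨆ s, |ε s| := le_ciSup (f := fun s => |ε s|) (Set.finite_range _).bddAbove r
  calc Df m n a xbar ε x z
      = (1 / (m : ℝ)) * ∑ r, quarticBregman (⟪a r, xbar⟫ ^ 2 + ε r) ⟪a r, x⟫ ⟪a r, z⟫ :=
        Df_eq m n a xbar ε x z
    _ ≤ (1 / (m : ℝ)) * ∑ r, ‖a r‖ ^ 2 * (3 * ‖a r‖ ^ 2 + ⨆ s, |ε s|) * Dψ n x z := by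
        gcongr with r
        rw [Dψ_eq]
        exact quarticBregman_inner_le (sq_nonneg _) (hε r) (a r) x z
    _ = ((1 / (m : ℝ)) * ∑ r, ‖a r‖ ^ 2 * (3 * ‖a r‖ ^ 2 + ⨆ s, |ε s|)) * Dψ n x z := by
        rw [← Finset.sum_mul, mul_assoc]
    _ ≤ L * Dψ n x z := mul_le_mul_of_nonneg_right hL (Dψ_nonneg n x z)

/-- `f` is `L`-relatively smooth w.r.t. the entropy `ψ` whenever
`L ≥ (1/m) Σ_r ‖a_r‖²(3‖a_r‖² + ‖ε‖_∞)`. -/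
theorem stmt0 (n m : ℕ) (hm : 1 ≤ m) (a : Fin m → EuclideanSpace ℝ (Fin n))
    (xbar : EuclideanSpace ℝ (Fin n)) (ε : Fin m → ℝ) (L : ℝ)
    (hL : L ≥ (1 / (m : ℝ)) * ∑ r, ‖a r‖ ^ 2 * (3 * ‖a r‖ ^ 2 + ⨆ s, |ε s|)) :
    ∀ x z : EuclideanSpace ℝ (Fin n), Df m n a xbar ε x z ≤ L * Dψ n x z :=
  stmt0_general n m a xbar ε L hL
end

section
/- For all x, u ∈ ℝⁿ and every ε ∈ ℝᵐ: ∫ (1/m) Σ_{r=1}^m (3⟨a_r,x⟩² − ⟨a_r,x̄⟩² − ε_r)⟨a_r,u⟩² dμ(a_1,…,a_m) = 6⟨x,u⟩² + 3‖x‖²‖u‖² − 2⟨x̄,u⟩² − ‖x̄‖²‖u‖² − ε̃‖u‖². (The integrand is the Hessian quadratic form ⟨u, ∇²f(x) u⟩ of the noisy phase-retrieval objective, so this computes the expected Hessian E[∇²f(x)] = 3(2xxᵀ + ‖x‖²I) − 2x̄x̄ᵀ − ‖x̄‖²I − ε̃I.) -/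
/-!
Each summand depends on a single Gaussian vector `a ~ N(0, I)`, and for every `v` the linear form
`⟪a, v⟫` is a centred real Gaussian of variance `‖v‖²`. Its moments come from the moment
generating function `t ↦ exp (‖v‖² t² / 2)`: the second moment is `‖v‖²` and the fourth is
`3 ‖v‖⁴`. The mixed moment `𝔼[⟪a, v⟫² ⟪a, u⟫²] = ‖v‖² ‖u‖² + 2 ⟪v, u⟫²` then follows by
polarization, since `(s + t)⁴ + (s - t)⁴ = 2 s⁴ + 12 s² t² + 2 t⁴`. Averaging over the `m`
samples gives the formula.
-/

open scoped RealInnerProductSpace BigOperators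

open MeasureTheory ProbabilityTheory

/-- The standard Gaussian measure on `ℝⁿ` (all coordinates i.i.d. `N(0,1)`). -/
noncomputable def stdGaussianE (n : ℕ) : Measure (EuclideanSpace ℝ (Fin n)) :=
  Measure.map (WithLp.toLp 2) (Measure.pi fun _ : Fin n => gaussianReal 0 1)

/-- The law of `m` i.i.d. standard Gaussian vectors in `ℝⁿ`. -/
noncomputable def gaussProduct (n m : ℕ) : Measure (Fin m → EuclideanSpace ℝ (Fin n)) :=
  Measure.pi fun _ : Fin m => stdGaussianE n

open scoped Real NNReal

section GaussianMoments

variable (v : ℝ)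

lemma deriv_mul_exp_half_sq {p p' q : ℝ → ℝ} (hp : ∀ t, HasDerivAt p (p' t) t)
    (hq : ∀ t, p' t + v * t * p t = q t) :
    deriv (fun t ↦ p t * rexp (v * t ^ 2 / 2)) = fun t ↦ q t * rexp (v * t ^ 2 / 2) := by
  ext t
  have he : HasDerivAt (fun t ↦ rexp (v * t ^ 2 / 2)) (rexp (v * t ^ 2 / 2) * (v * t)) t := by
    convert (((hasDerivAt_pow 2 t).const_mul v).div_const 2).exp using 1
    push_cast
    ring
  rw [((hp t).fun_mul he).deriv, ← hq]
  ring

lemma iteratedDeriv_two_exp_half_sq :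
    iteratedDeriv 2 (fun t ↦ rexp (v * t ^ 2 / 2)) =
      fun t ↦ (v + v ^ 2 * t ^ 2) * rexp (v * t ^ 2 / 2) := by
  have h1 := deriv_mul_exp_half_sq v (p := fun _ ↦ 1) (q := fun t ↦ v * t)
    (fun t ↦ hasDerivAt_const t 1) (fun t ↦ by ring)
  have h2 := deriv_mul_exp_half_sq v (p := fun t ↦ v * t) (q := fun t ↦ v + v ^ 2 * t ^ 2)
    (fun t ↦ (hasDerivAt_id' t).const_mul v) (fun t ↦ by ring)
  simp only [one_mul] at h1
  rw [iteratedDeriv_succ, iteratedDeriv_one, h1, h2]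

lemma iteratedDeriv_four_exp_half_sq :
    iteratedDeriv 4 (fun t ↦ rexp (v * t ^ 2 / 2)) =
      fun t ↦ (3 * v ^ 2 + 6 * v ^ 3 * t ^ 2 + v ^ 4 * t ^ 4) * rexp (v * t ^ 2 / 2) := by
  have h3 := deriv_mul_exp_half_sq v (p := fun t ↦ v + v ^ 2 * t ^ 2)
    (q := fun t ↦ 3 * v ^ 2 * t + v ^ 3 * t ^ 3)
    (fun t ↦ ((hasDerivAt_pow 2 t).const_mul (v ^ 2)).const_add v) (fun t ↦ by push_cast; ring)
  have h4 := deriv_mul_exp_half_sq v (p := fun t ↦ 3 * v ^ 2 * t + v ^ 3 * t ^ 3)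
    (q := fun t ↦ 3 * v ^ 2 + 6 * v ^ 3 * t ^ 2 + v ^ 4 * t ^ 4)
    (fun t ↦ ((hasDerivAt_id' t).const_mul (3 * v ^ 2)).fun_add
      ((hasDerivAt_pow 3 t).const_mul (v ^ 3))) (fun t ↦ by push_cast; ring)
  rw [iteratedDeriv_succ, iteratedDeriv_succ, iteratedDeriv_two_exp_half_sq, h3, h4]

end GaussianMoments

lemma integrable_pow_gaussianReal (μ : ℝ) (v : ℝ≥0) (k : ℕ) :
    Integrable (fun x ↦ x ^ k) (gaussianReal μ v) :=
  integrable_pow_of_mem_interior_integrableExpSet (X := fun x ↦ x) (by simp) k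

lemma integral_pow_gaussianReal (v : ℝ≥0) (k : ℕ) :
    ∫ x, x ^ k ∂gaussianReal 0 v = iteratedDeriv k (fun t ↦ rexp (v * t ^ 2 / 2)) 0 := by
  have h := iteratedDeriv_mgf_zero (X := fun x ↦ x) (μ := gaussianReal 0 v) (by simp) k
  simpa [mgf_fun_id_gaussianReal] using h.symm

lemma integral_sq_gaussianReal (v : ℝ≥0) : ∫ x, x ^ 2 ∂gaussianReal 0 v = v := by
  simp [integral_pow_gaussianReal, iteratedDeriv_two_exp_half_sq]

lemma integral_pow_four_gaussianReal (v : ℝ≥0) :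
    ∫ x, x ^ 4 ∂gaussianReal 0 v = 3 * (v : ℝ) ^ 2 := by
  simp [integral_pow_gaussianReal, iteratedDeriv_four_exp_half_sq]

section StdGaussian

variable {E : Type*} [NormedAddCommGroup E] [InnerProductSpace ℝ E] [FiniteDimensional ℝ E]
  [MeasurableSpace E] [BorelSpace E]

lemma stdGaussian_map_inner_right (v : E) :
    (stdGaussian E).map (fun a ↦ ⟪a, v⟫) = gaussianReal 0 (‖v‖₊ ^ 2) := by
  have h := IsGaussian.map_eq_gaussianReal (μ := stdGaussian E) (innerSL ℝ v)
  simp only [integral_strongDual_stdGaussian, variance_dual_stdGaussian, innerSL_apply_norm] at h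
  simp_rw [real_inner_comm v]
  convert h using 2
  · rfl
  · rw [← norm_toNNReal, Real.toNNReal_pow (norm_nonneg v)]

lemma integrable_inner_pow_stdGaussian (v : E) (k : ℕ) :
    Integrable (fun a ↦ ⟪a, v⟫ ^ k) (stdGaussian E) := by
  have h := integrable_pow_gaussianReal 0 (‖v‖₊ ^ 2) k
  rwa [← stdGaussian_map_inner_right, integrable_map_measure (by fun_prop) (by fun_prop)] at h

lemma integral_inner_pow_stdGaussian (v : E) (k : ℕ) :
    ∫ a, ⟪a, v⟫ ^ k ∂stdGaussian E = ∫ x, x ^ k ∂gaussianReal 0 (‖v‖₊ ^ 2) := by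
  rw [← stdGaussian_map_inner_right, integral_map (by fun_prop) (by fun_prop)]

lemma integral_inner_sq_stdGaussian (v : E) : ∫ a, ⟪a, v⟫ ^ 2 ∂stdGaussian E = ‖v‖ ^ 2 := by
  simp [integral_inner_pow_stdGaussian, integral_sq_gaussianReal]

lemma integral_inner_pow_four_stdGaussian (v : E) :
    ∫ a, ⟪a, v⟫ ^ 4 ∂stdGaussian E = 3 * ‖v‖ ^ 4 := by
  simp [integral_inner_pow_stdGaussian, integral_pow_four_gaussianReal, ← pow_mul]

omit [FiniteDimensional ℝ E] [MeasurableSpace E] [BorelSpace E] in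
lemma inner_sq_mul_inner_sq_eq (a v u : E) :
    ⟪a, v⟫ ^ 2 * ⟪a, u⟫ ^ 2 =
      (⟪a, v + u⟫ ^ 4 + ⟪a, v - u⟫ ^ 4 - 2 * ⟪a, v⟫ ^ 4 - 2 * ⟪a, u⟫ ^ 4) / 12 := by
  rw [inner_add_right, inner_sub_right]
  ring

lemma integrable_inner_sq_mul_inner_sq_stdGaussian (v u : E) :
    Integrable (fun a ↦ ⟪a, v⟫ ^ 2 * ⟪a, u⟫ ^ 2) (stdGaussian E) := by
  have hI := fun w : E ↦ integrable_inner_pow_stdGaussian w 4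
  simp_rw [inner_sq_mul_inner_sq_eq]
  fun_prop

lemma integral_inner_sq_mul_inner_sq_stdGaussian (v u : E) :
    ∫ a, ⟪a, v⟫ ^ 2 * ⟪a, u⟫ ^ 2 ∂stdGaussian E = ‖v‖ ^ 2 * ‖u‖ ^ 2 + 2 * ⟪v, u⟫ ^ 2 := by
  have hI := fun w : E ↦ integrable_inner_pow_stdGaussian w 4
  simp_rw [inner_sq_mul_inner_sq_eq]
  rw [integral_div, integral_sub, integral_sub, integral_add, integral_const_mul,
    integral_const_mul]
  · simp only [integral_inner_pow_four_stdGaussian]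
    rw [show ‖v + u‖ ^ 4 = (‖v + u‖ ^ 2) ^ 2 by ring, show ‖v - u‖ ^ 4 = (‖v - u‖ ^ 2) ^ 2 by ring,
      norm_add_sq_real, norm_sub_sq_real]
    ring
  all_goals fun_prop

omit [FiniteDimensional ℝ E] [MeasurableSpace E] [BorelSpace E] in
lemma hessianForm_eq (x xbar u a : E) (c : ℝ) :
    (3 * ⟪a, x⟫ ^ 2 - ⟪a, xbar⟫ ^ 2 - c) * ⟪a, u⟫ ^ 2 =
      3 * (⟪a, x⟫ ^ 2 * ⟪a, u⟫ ^ 2) - ⟪a, xbar⟫ ^ 2 * ⟪a, u⟫ ^ 2 - c * ⟪a, u⟫ ^ 2 := by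
  ring

lemma integrable_hessianForm_stdGaussian (x xbar u : E) (c : ℝ) :
    Integrable (fun a ↦ (3 * ⟪a, x⟫ ^ 2 - ⟪a, xbar⟫ ^ 2 - c) * ⟪a, u⟫ ^ 2) (stdGaussian E) := by
  have hx := integrable_inner_sq_mul_inner_sq_stdGaussian x u
  have hxbar := integrable_inner_sq_mul_inner_sq_stdGaussian xbar u
  have hu := integrable_inner_pow_stdGaussian u 2
  simp_rw [hessianForm_eq]
  fun_prop

lemma integral_hessianForm_stdGaussian (x xbar u : E) (c : ℝ) :
    ∫ a, (3 * ⟪a, x⟫ ^ 2 - ⟪a, xbar⟫ ^ 2 - c) * ⟪a, u⟫ ^ 2 ∂stdGaussian E =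
      6 * ⟪x, u⟫ ^ 2 + 3 * ‖x‖ ^ 2 * ‖u‖ ^ 2 - 2 * ⟪xbar, u⟫ ^ 2 - ‖xbar‖ ^ 2 * ‖u‖ ^ 2
        - c * ‖u‖ ^ 2 := by
  have hx := integrable_inner_sq_mul_inner_sq_stdGaussian x u
  have hxbar := integrable_inner_sq_mul_inner_sq_stdGaussian xbar u
  have hu := integrable_inner_pow_stdGaussian u 2
  simp_rw [hessianForm_eq]
  rw [integral_sub, integral_sub, integral_const_mul, integral_const_mul,
    integral_inner_sq_mul_inner_sq_stdGaussian, integral_inner_sq_mul_inner_sq_stdGaussian,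
    integral_inner_sq_stdGaussian]
  · ring
  all_goals fun_prop

end StdGaussian

lemma integral_sum_comp_eval_pi {ι X : Type*} [Fintype ι] [MeasurableSpace X] (μ : Measure X)
    [IsProbabilityMeasure μ] (f : ι → X → ℝ) (hf : ∀ i, Integrable (f i) μ) :
    ∫ a, ∑ i, f i (a i) ∂Measure.pi (fun _ ↦ μ) = ∑ i, ∫ x, f i x ∂μ := by
  rw [integral_finsetSum _ fun i _ ↦ integrable_comp_eval (hf i)]
  exact Finset.sum_congr rfl fun i _ ↦ integral_comp_eval (hf i).aestronglyMeasurable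

lemma stdGaussianE_eq_stdGaussian (n : ℕ) :
    stdGaussianE n = stdGaussian (EuclideanSpace ℝ (Fin n)) :=
  map_pi_eq_stdGaussian

/-- expectation of the Hessian quadratic form of the noisy
phase-retrieval objective under Gaussian measurements. -/
theorem stmt5 (n m : ℕ) (hm : 1 ≤ m) (xbar : EuclideanSpace ℝ (Fin n)) (ε : Fin m → ℝ)
    (x u : EuclideanSpace ℝ (Fin n)) :
    (∫ a : Fin m → EuclideanSpace ℝ (Fin n),
        (1 / (m : ℝ)) * ∑ r, (3 * ⟪a r, x⟫ ^ 2 - ⟪a r, xbar⟫ ^ 2 - ε r) * ⟪a r, u⟫ ^ 2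
          ∂(gaussProduct n m)) =
      6 * ⟪x, u⟫ ^ 2 + 3 * ‖x‖ ^ 2 * ‖u‖ ^ 2 - 2 * ⟪xbar, u⟫ ^ 2 - ‖xbar‖ ^ 2 * ‖u‖ ^ 2
        - ((1 / (m : ℝ)) * ∑ r, ε r) * ‖u‖ ^ 2 := by
  have hm₀ : (m : ℝ) ≠ 0 := Nat.cast_ne_zero.mpr (Nat.one_le_iff_ne_zero.mp hm)
  rw [gaussProduct, stdGaussianE_eq_stdGaussian, integral_const_mul,
    integral_sum_comp_eval_pi _ (fun r a ↦ (3 * ⟪a, x⟫ ^ 2 - ⟪a, xbar⟫ ^ 2 - ε r) * ⟪a, u⟫ ^ 2)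
      fun r ↦ integrable_hessianForm_stdGaussian x xbar u (ε r)]
  simp only [integral_hessianForm_stdGaussian]
  rw [Finset.sum_sub_distrib, Finset.sum_const, ← Finset.sum_mul, Finset.card_univ,
    Fintype.card_fin, nsmul_eq_mul]
  field_simp
end

section
/- Fix λ ∈ (1/(9√2), 1) and assume 0 ≤ ε̃ < λ·min(‖x̄‖²,1). Fix ϱ ∈ (0, (λ·min(‖x̄‖²,1) − ε̃)/(2·max(‖x̄‖²/3 + ‖ε‖_∞, 1))), set ρ = (1−λ)‖x̄‖/√3 and σ = λ·min(‖x̄‖²,1) − ε̃ − ϱ·max(‖x̄‖²/3 + ‖ε‖_∞, 1). Suppose there exists c_s ≥ 0 such that ‖ε‖_∞ ≤ c_s·min(‖x̄‖²,1) and (1−λ)·‖x̄‖·√(λ·min(‖x̄‖²,1) − ε̃) > 2√6·c_s·min(‖x̄‖²,1). Then ρ² − 4‖ε‖²/(mσ) > 0. -/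
open scoped BigOperators

/-!
Write `D = λ·min(‖x̄‖², 1) − ε̃` and `c = c_s·min(‖x̄‖², 1)`, so that `‖ε‖_∞ ≤ c`.
The choice of `ϱ` makes `σ > D/2`, and squaring the signal-to-noise assumption gives
`(1 − λ)²‖x̄‖² D > 24 c²`; hence `(1 − λ)²‖x̄‖² σ > 12 c²`, i.e. `ρ² > 4c²/σ`.
Finally `‖ε‖² ≤ m ‖ε‖_∞² ≤ m c²`, so the noise term `4‖ε‖²/(mσ)` is at most `4c²/σ`.
-/

lemma sum_sq_le_card_mul_iSup_abs_sq {ι : Type*} [Fintype ι] (f : ι → ℝ) :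
    ∑ i, f i ^ 2 ≤ Fintype.card ι * (⨆ i, |f i|) ^ 2 := by
  have hle : ∀ i, |f i| ≤ ⨆ j, |f j| := fun i =>
    le_ciSup (Set.finite_range fun j => |f j|).bddAbove i
  calc ∑ i, f i ^ 2 ≤ ∑ _i : ι, (⨆ j, |f j|) ^ 2 :=
        Finset.sum_le_sum fun i _ => sq_abs (f i) ▸ pow_le_pow_left₀ (abs_nonneg _) (hle i) 2
    _ = Fintype.card ι * (⨆ i, |f i|) ^ 2 := by simp

lemma four_mul_sum_sq_div_card_mul_le {ι : Type*} [Fintype ι] (f : ι → ℝ) {σ c : ℝ}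
    (hσ : 0 < σ) (hc : (⨆ i, |f i|) ≤ c) :
    4 * (∑ i, f i ^ 2) / (Fintype.card ι * σ) ≤ 4 * c ^ 2 / σ := by
  have hsup : 0 ≤ ⨆ i, |f i| := Real.iSup_nonneg fun i => abs_nonneg (f i)
  have hmean : (∑ i, f i ^ 2) / Fintype.card ι ≤ c ^ 2 := by
    refine div_le_of_le_mul₀ (Nat.cast_nonneg _) (sq_nonneg c) ?_
    calc ∑ i, f i ^ 2 ≤ Fintype.card ι * (⨆ i, |f i|) ^ 2 := sum_sq_le_card_mul_iSup_abs_sq f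
      _ ≤ c ^ 2 * Fintype.card ι := by rw [mul_comm]; gcongr
  calc 4 * (∑ i, f i ^ 2) / (Fintype.card ι * σ)
      = 4 * ((∑ i, f i ^ 2) / Fintype.card ι) / σ := by ring
    _ ≤ 4 * c ^ 2 / σ := by gcongr

lemma four_mul_sq_div_lt_sq_div_three {a c D σ : ℝ} (hD : 0 < D) (hσ : D / 2 < σ)
    (hc : 0 ≤ c) (h : 2 * Real.sqrt 6 * c < a * Real.sqrt D) :
    4 * c ^ 2 / σ < a ^ 2 / 3 := by
  have hsq : 24 * c ^ 2 < a ^ 2 * D := by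
    have := pow_lt_pow_left₀ h (mul_nonneg (by positivity) hc) two_ne_zero
    rw [mul_pow, mul_pow, mul_pow, Real.sq_sqrt hD.le, Real.sq_sqrt (by norm_num)] at this
    linarith
  have hσD : a ^ 2 * D / 2 ≤ a ^ 2 * σ := by
    rw [mul_div_assoc]; exact mul_le_mul_of_nonneg_left hσ.le (sq_nonneg a)
  rw [div_lt_div_iff₀ (by linarith) (by norm_num)]
  linarith

theorem stmt13_general (n m : ℕ) (xbar : EuclideanSpace ℝ (Fin n)) (ε : Fin m → ℝ)
    (lam : ℝ)
    (hεt1 : (1 / (m : ℝ)) * ∑ r, ε r < lam * min (‖xbar‖ ^ 2) 1)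
    (ϱ : ℝ)
    (hϱ1 : ϱ < (lam * min (‖xbar‖ ^ 2) 1 - (1 / (m : ℝ)) * ∑ r, ε r) /
      (2 * max (‖xbar‖ ^ 2 / 3 + ⨆ s, |ε s|) 1))
    (ρ σ : ℝ) (hρ : ρ = (1 - lam) * ‖xbar‖ / Real.sqrt 3)
    (hσ : σ = lam * min (‖xbar‖ ^ 2) 1 - (1 / (m : ℝ)) * ∑ r, ε r
      - ϱ * max (‖xbar‖ ^ 2 / 3 + ⨆ s, |ε s|) 1)
    (cs : ℝ)
    (hcs1 : (⨆ s, |ε s|) ≤ cs * min (‖xbar‖ ^ 2) 1)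
    (hcs2 : (1 - lam) * ‖xbar‖ *
        Real.sqrt (lam * min (‖xbar‖ ^ 2) 1 - (1 / (m : ℝ)) * ∑ r, ε r) >
      2 * Real.sqrt 6 * cs * min (‖xbar‖ ^ 2) 1) :
    ρ ^ 2 - 4 * (∑ r, ε r ^ 2) / (m * σ) > 0 := by
  set D := lam * min (‖xbar‖ ^ 2) 1 - (1 / (m : ℝ)) * ∑ r, ε r
  set K := max (‖xbar‖ ^ 2 / 3 + ⨆ s, |ε s|) 1
  have hD : 0 < D := sub_pos.mpr hεt1
  have hσ_half : D / 2 < σ := by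
    have hK : 0 < 2 * K := by positivity
    rw [lt_div_iff₀ hK] at hϱ1
    linarith
  have hc : 0 ≤ cs * min (‖xbar‖ ^ 2) 1 :=
    (Real.iSup_nonneg fun s => abs_nonneg (ε s)).trans hcs1
  have hρ_sq : ρ ^ 2 = ((1 - lam) * ‖xbar‖) ^ 2 / 3 := by
    rw [hρ, div_pow, Real.sq_sqrt (by norm_num)]
  have hnoise := four_mul_sum_sq_div_card_mul_le ε (σ := σ) (by linarith) hcs1
  rw [Fintype.card_fin] at hnoise
  have hsignal := four_mul_sq_div_lt_sq_div_three (a := (1 - lam) * ‖xbar‖) hD hσ_half hc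
    (by rw [← mul_assoc]; exact hcs2)
  rw [← hρ_sq] at hsignal
  linarith

/-- under the signal-to-noise assumption, the radius of strong
convexity dominates the noise: `ρ² − 4‖ε‖²/(mσ) > 0`. -/
theorem stmt13 (n m : ℕ) (hm : 1 ≤ m) (xbar : EuclideanSpace ℝ (Fin n)) (ε : Fin m → ℝ)
    (lam : ℝ) (hlam1 : 1 / (9 * Real.sqrt 2) < lam) (hlam2 : lam < 1)
    (hεt0 : 0 ≤ (1 / (m : ℝ)) * ∑ r, ε r)
    (hεt1 : (1 / (m : ℝ)) * ∑ r, ε r < lam * min (‖xbar‖ ^ 2) 1)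
    (ϱ : ℝ) (hϱ0 : 0 < ϱ)
    (hϱ1 : ϱ < (lam * min (‖xbar‖ ^ 2) 1 - (1 / (m : ℝ)) * ∑ r, ε r) /
      (2 * max (‖xbar‖ ^ 2 / 3 + ⨆ s, |ε s|) 1))
    (ρ σ : ℝ) (hρ : ρ = (1 - lam) * ‖xbar‖ / Real.sqrt 3)
    (hσ : σ = lam * min (‖xbar‖ ^ 2) 1 - (1 / (m : ℝ)) * ∑ r, ε r
      - ϱ * max (‖xbar‖ ^ 2 / 3 + ⨆ s, |ε s|) 1)
    (cs : ℝ) (hcs0 : 0 ≤ cs)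
    (hcs1 : (⨆ s, |ε s|) ≤ cs * min (‖xbar‖ ^ 2) 1)
    (hcs2 : (1 - lam) * ‖xbar‖ *
        Real.sqrt (lam * min (‖xbar‖ ^ 2) 1 - (1 / (m : ℝ)) * ∑ r, ε r) >
      2 * Real.sqrt 6 * cs * min (‖xbar‖ ^ 2) 1) :
    ρ ^ 2 - 4 * (∑ r, ε r ^ 2) / (m * σ) > 0 :=
  stmt13_general n m xbar ε lam hεt1 ϱ hϱ1 ρ σ hρ hσ cs hcs1 hcs2
end

section
/- Let x̄, x⋆ ∈ ℝⁿ with ‖x̄‖ = 1 and let ε₀ be a real number with 0 < ε₀ < 1/3. If the rank-one matrices satisfy ‖x⋆ x⋆ᵀ − x̄ x̄ᵀ‖_F ≤ ε₀ in Frobenius norm, then min(‖x⋆ − x̄‖, ‖x⋆ + x̄‖) ≤ 2ε₀. -/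
/-!
Put `a = ‖x⋆‖²`, `b = ⟪x⋆, x̄⟫` and let `S = ‖x⋆x⋆ᵀ - x̄x̄ᵀ‖_F²`. Then `S = a² - 2b² + 1` and
`2S = ‖x⋆ - x̄‖²‖x⋆ + x̄‖² + (a - 1)²`, so `‖x⋆ - x̄‖‖x⋆ + x̄‖ ≤ √2 ε₀`. The larger of the two
factors is at least `‖x̄‖ = 1` by the triangle inequality, hence the smaller is at most `√2 ε₀`.
-/

theorem EuclideanSpace.sum_sum_sq_sub_mul_eq {ι : Type*} [Fintype ι]
    (x y : EuclideanSpace ℝ ι) :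
    ∑ i, ∑ j, (x i * x j - y i * y j) ^ 2
      = ‖x‖ ^ 2 * ‖x‖ ^ 2 - 2 * (inner ℝ x y * inner ℝ x y) + ‖y‖ ^ 2 * ‖y‖ ^ 2 := by
  have inner_eq : inner ℝ x y = ∑ i, x i * y i := by
    simp [PiLp.inner_apply, mul_comm]
  simp only [EuclideanSpace.norm_sq_eq, Real.norm_eq_abs, sq_abs, inner_eq, Finset.sum_mul_sum]
  simp only [Finset.mul_sum, ← Finset.sum_sub_distrib, ← Finset.sum_add_distrib]
  refine Finset.sum_congr rfl fun i _ => Finset.sum_congr rfl fun j _ => ?_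
  ring

theorem norm_sub_sq_mul_norm_add_sq_add_sq_real {E : Type*} [SeminormedAddCommGroup E]
    [InnerProductSpace ℝ E] (x y : E) :
    ‖x - y‖ ^ 2 * ‖x + y‖ ^ 2 + (‖x‖ ^ 2 - ‖y‖ ^ 2) ^ 2
      = 2 * (‖x‖ ^ 2 * ‖x‖ ^ 2 - 2 * (inner ℝ x y * inner ℝ x y) + ‖y‖ ^ 2 * ‖y‖ ^ 2) := by
  rw [norm_sub_sq_real, norm_add_sq_real]
  ring

theorem norm_mul_min_norm_sub_norm_add_le {E : Type*} [SeminormedAddCommGroup E]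
    [NormedSpace ℝ E] (x y : E) :
    ‖y‖ * min ‖x - y‖ ‖x + y‖ ≤ ‖x - y‖ * ‖x + y‖ := by
  have two_y : 2 * ‖y‖ ≤ ‖x + y‖ + ‖x - y‖ := by
    calc 2 * ‖y‖ = ‖(2 : ℝ) • y‖ := by rw [norm_smul, Real.norm_two]
      _ = ‖(x + y) - (x - y)‖ := by rw [two_smul]; congr 1; abel
      _ ≤ ‖x + y‖ + ‖x - y‖ := norm_sub_le _ _
  set m := min ‖x - y‖ ‖x + y‖
  have hm : 0 ≤ m := le_min (norm_nonneg _) (norm_nonneg _)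
  have twice : 2 * (‖y‖ * m) ≤ 2 * (‖x - y‖ * ‖x + y‖) :=
    calc 2 * (‖y‖ * m) ≤ (‖x + y‖ + ‖x - y‖) * m := by nlinarith
      _ = ‖x + y‖ * m + m * ‖x - y‖ := by ring
      _ ≤ ‖x + y‖ * ‖x - y‖ + ‖x + y‖ * ‖x - y‖ := by
        gcongr
        exacts [min_le_left _ _, min_le_right _ _]
      _ = 2 * (‖x - y‖ * ‖x + y‖) := by ring
  linarith

theorem stmt15_general (n : ℕ) (xbar xstar : EuclideanSpace ℝ (Fin n)) (hxbar : ‖xbar‖ = 1)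
    (ε₀ : ℝ)
    (hF : Real.sqrt (∑ i, ∑ j, (xstar i * xstar j - xbar i * xbar j) ^ 2) ≤ ε₀) :
    min ‖xstar - xbar‖ ‖xstar + xbar‖ ≤ 2 * ε₀ := by
  obtain ⟨hε₀, hS⟩ := Real.sqrt_le_iff.mp hF
  rw [EuclideanSpace.sum_sum_sq_sub_mul_eq] at hS
  have hprod : (‖xstar - xbar‖ * ‖xstar + xbar‖) ^ 2 ≤ 2 * ε₀ ^ 2 := by
    nlinarith [norm_sub_sq_mul_norm_add_sq_add_sq_real xstar xbar,
      sq_nonneg (‖xstar‖ ^ 2 - ‖xbar‖ ^ 2)]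
  have hmin := norm_mul_min_norm_sub_norm_add_le xstar xbar
  rw [hxbar, one_mul] at hmin
  have hmin0 : 0 ≤ min ‖xstar - xbar‖ ‖xstar + xbar‖ := le_min (norm_nonneg _) (norm_nonneg _)
  rw [← pow_le_pow_iff_left₀ hmin0 (by linarith) two_ne_zero]
  calc min ‖xstar - xbar‖ ‖xstar + xbar‖ ^ 2 ≤ (‖xstar - xbar‖ * ‖xstar + xbar‖) ^ 2 :=
        pow_le_pow_left₀ hmin0 hmin 2
    _ ≤ 2 * ε₀ ^ 2 := hprod
    _ ≤ (2 * ε₀) ^ 2 := by nlinarith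

/-- if the rank-one matrices `x⋆x⋆ᵀ` and `x̄x̄ᵀ` are `ε₀`-close in
Frobenius norm and `‖x̄‖ = 1`, then `x⋆` is `2ε₀`-close to `x̄` or to `−x̄`. -/
theorem stmt15 (n : ℕ) (xbar xstar : EuclideanSpace ℝ (Fin n)) (hxbar : ‖xbar‖ = 1)
    (ε₀ : ℝ) (hε₀0 : 0 < ε₀) (hε₀1 : ε₀ < 1 / 3)
    (hF : Real.sqrt (∑ i, ∑ j, (xstar i * xstar j - xbar i * xbar j) ^ 2) ≤ ε₀) :
    min ‖xstar - xbar‖ ‖xstar + xbar‖ ≤ 2 * ε₀ :=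
  stmt15_general n xbar xstar hxbar ε₀ hF
end

section
/- Let x̄ ∈ ℝⁿ with x̄ ≠ 0, let ε̃ ≥ 0, and let δ be a real number with 0 ≤ δ ≤ ‖x̄‖². Let Y be a real symmetric n×n matrix with ‖Y − 2x̄x̄ᵀ − (‖x̄‖² + ε̃)·I‖ ≤ δ in operator norm. If x̃ ∈ ℝⁿ is an eigenvector of Y associated with its largest eigenvalue, normalized so that ‖x̃‖ = ‖x̄‖, then min(‖x̃ − x̄‖, ‖x̃ + x̄‖) ≤ √(2 − 2√(1 − δ/‖x̄‖²)) · ‖x̄‖. -/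
/-!
Up to an error of `δ ‖v‖²`, the quadratic form of `Y` is `2 ⟪x̄, v⟫² + (‖x̄‖² + ε̃) ‖v‖²`.
The top eigenvalue bounds the Rayleigh quotient, so `⟪Y x̄, x̄⟫ ≤ lmax ‖x̄‖² = ⟪Y x̃, x̃⟫`;
comparing both sides with the model gives `⟪x̄, x̃⟫² ≥ ‖x̄‖⁴ - δ ‖x̄‖²`. For vectors of equal
norm, `min (‖x̃ - x̄‖, ‖x̃ + x̄‖)² = 2 ‖x̄‖² - 2 |⟪x̄, x̃⟫|`, which turns this into the bound.
-/

open scoped RealInnerProductSpace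

open Module.End

theorem mul_sqrt_one_sub_div_le_abs {a δ t : ℝ} (ha : 0 ≤ a) (h : a ^ 2 - δ * a ≤ t ^ 2) :
    a * √(1 - δ / a) ≤ |t| :=
  calc a * √(1 - δ / a) = √(a ^ 2 * (1 - δ / a)) := by
        rw [Real.sqrt_mul (sq_nonneg a), Real.sqrt_sq ha]
    _ = √(a ^ 2 - δ * a) := by
        rcases ha.eq_or_lt with rfl | ha
        · simp
        · congr 1; field_simp
    _ ≤ √(t ^ 2) := Real.sqrt_le_sqrt h
    _ = |t| := Real.sqrt_sq_eq_abs t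

section InnerProductSpace

variable {F : Type*} [NormedAddCommGroup F] [InnerProductSpace ℝ F]

theorem abs_inner_apply_self_sub_le_of_norm_sub_le {T A : F →L[ℝ] F} {δ : ℝ}
    (h : ‖T - A‖ ≤ δ) (v : F) : |⟪T v, v⟫ - ⟪A v, v⟫| ≤ δ * ‖v‖ ^ 2 :=
  calc |⟪T v, v⟫ - ⟪A v, v⟫| = |⟪(T - A) v, v⟫| := by
        rw [sub_apply, inner_sub_left]
    _ ≤ ‖(T - A) v‖ * ‖v‖ := abs_real_inner_le_norm _ _
    _ ≤ ‖T - A‖ * ‖v‖ * ‖v‖ := by gcongr; exact (T - A).le_opNorm v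
    _ ≤ δ * ‖v‖ ^ 2 := by rw [mul_assoc, ← sq]; gcongr

theorem inner_smulRight_add_smul_id_apply_self (a c : ℝ) (x v : F) :
    ⟪(a • (innerSL ℝ x).smulRight x + c • ContinuousLinearMap.id ℝ F) v, v⟫ =
      a * ⟪x, v⟫ ^ 2 + c * ‖v‖ ^ 2 := by
  simp only [add_apply, smul_apply, ContinuousLinearMap.smulRight_apply,
    innerSL_apply_apply, ContinuousLinearMap.id_apply,
    inner_add_left, real_inner_smul_left, real_inner_self_eq_norm_sq]
  ring

theorem ContinuousLinearMap.inner_apply_self_le_of_forall_hasEigenvalue_le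
    [FiniteDimensional ℝ F] {T : F →L[ℝ] F} (hT : (T : F →ₗ[ℝ] F).IsSymmetric) {c : ℝ}
    (hc : ∀ μ, HasEigenvalue (T : F →ₗ[ℝ] F) μ → μ ≤ c) (x : F) :
    ⟪T x, x⟫ ≤ c * ‖x‖ ^ 2 := by
  rcases eq_or_ne x 0 with rfl | hx
  · simp
  have : Nontrivial F := ⟨⟨x, 0, hx⟩⟩
  have hbdd : BddAbove (Set.range fun y : { y : F // y ≠ 0 } ↦ T.rayleighQuotient y) :=
    ⟨‖T‖, by rintro _ ⟨y, rfl⟩; exact (le_abs_self _).trans (T.rayleighQuotient_le_norm y)⟩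
  calc ⟪T x, x⟫ = T.rayleighQuotient x * ‖x‖ ^ 2 := by
        rw [div_mul_cancel₀ _ (by positivity)]; rfl
    _ ≤ (⨆ y : { y : F // y ≠ 0 }, T.rayleighQuotient y) * ‖x‖ ^ 2 := by
        gcongr; exact le_ciSup hbdd ⟨x, hx⟩
    _ ≤ c * ‖x‖ ^ 2 := by gcongr; exact hc _ hT.hasEigenvalue_iSup_of_finiteDimensional

theorem pow_four_sub_le_sq_inner_of_norm_sub_le {Y : F →L[ℝ] F} {x y : F} {c δ l : ℝ}
    (hclose : ‖Y - ((2 : ℝ) • (innerSL ℝ x).smulRight x + c • ContinuousLinearMap.id ℝ F)‖ ≤ δ)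
    (hx : ⟪Y x, x⟫ ≤ l * ‖x‖ ^ 2) (hy : Y y = l • y) (hnorm : ‖y‖ = ‖x‖) :
    ‖x‖ ^ 4 - δ * ‖x‖ ^ 2 ≤ ⟪x, y⟫ ^ 2 := by
  have hmodel := abs_inner_apply_self_sub_le_of_norm_sub_le hclose
  have hYx := (abs_le.1 (hmodel x)).1
  have hYy := (abs_le.1 (hmodel y)).2
  rw [inner_smulRight_add_smul_id_apply_self, real_inner_self_eq_norm_sq] at hYx
  rw [inner_smulRight_add_smul_id_apply_self, hy, real_inner_smul_left,
    real_inner_self_eq_norm_sq, hnorm] at hYy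
  nlinarith

theorem min_norm_sub_norm_add_sq_le {x y : F} (hnorm : ‖y‖ = ‖x‖) :
    min ‖y - x‖ ‖y + x‖ ^ 2 ≤ 2 * ‖x‖ ^ 2 - 2 * |⟪x, y⟫| := by
  have hsub : ‖y - x‖ ^ 2 = 2 * ‖x‖ ^ 2 - 2 * ⟪x, y⟫ := by
    rw [norm_sub_sq_real, hnorm, real_inner_comm]; ring
  have hadd : ‖y + x‖ ^ 2 = 2 * ‖x‖ ^ 2 + 2 * ⟪x, y⟫ := by
    rw [norm_add_sq_real, hnorm, real_inner_comm]; ring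
  rcases le_total 0 ⟪x, y⟫ with h | h
  · rw [abs_of_nonneg h, ← hsub]
    gcongr
    exact min_le_left _ _
  · rw [abs_of_nonpos h, mul_neg, sub_neg_eq_add, ← hadd]
    gcongr
    exact min_le_right _ _

theorem min_norm_sub_norm_add_le_of_pow_four_sub_le_sq_inner {x y : F} {δ : ℝ}
    (hnorm : ‖y‖ = ‖x‖)
    (h : ‖x‖ ^ 4 - δ * ‖x‖ ^ 2 ≤ ⟪x, y⟫ ^ 2) :
    min ‖y - x‖ ‖y + x‖ ≤ √(2 - 2 * √(1 - δ / ‖x‖ ^ 2)) * ‖x‖ := by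
  have hmin := min_norm_sub_norm_add_sq_le hnorm
  have hinner := mul_sqrt_one_sub_div_le_abs (t := ⟪x, y⟫) (sq_nonneg ‖x‖)
    (by rw [← pow_mul]; exact h)
  calc min ‖y - x‖ ‖y + x‖ = √(min ‖y - x‖ ‖y + x‖ ^ 2) := (Real.sqrt_sq (by positivity)).symm
    _ ≤ √((2 - 2 * √(1 - δ / ‖x‖ ^ 2)) * ‖x‖ ^ 2) := Real.sqrt_le_sqrt (by linarith)
    _ = √(2 - 2 * √(1 - δ / ‖x‖ ^ 2)) * ‖x‖ := by
        rw [Real.sqrt_mul' _ (sq_nonneg _), Real.sqrt_sq (norm_nonneg _)]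

end InnerProductSpace

theorem stmt16_general (n : ℕ) (xbar : EuclideanSpace ℝ (Fin n))
    (εt : ℝ) (δ : ℝ)
    (Y : EuclideanSpace ℝ (Fin n) →L[ℝ] EuclideanSpace ℝ (Fin n))
    (hsym : ∀ u v : EuclideanSpace ℝ (Fin n), ⟪Y u, v⟫ = ⟪u, Y v⟫)
    (hclose : ‖Y - ((2 : ℝ) • ((innerSL ℝ xbar).smulRight xbar)
        + (‖xbar‖ ^ 2 + εt) • ContinuousLinearMap.id ℝ (EuclideanSpace ℝ (Fin n)))‖ ≤ δ)
    (lmax : ℝ) (xt : EuclideanSpace ℝ (Fin n))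
    (heig : Y xt = lmax • xt) (hnorm : ‖xt‖ = ‖xbar‖)
    (hmax : ∀ (μ : ℝ) (v : EuclideanSpace ℝ (Fin n)), v ≠ 0 → Y v = μ • v → μ ≤ lmax) :
    min ‖xt - xbar‖ ‖xt + xbar‖ ≤
      Real.sqrt (2 - 2 * Real.sqrt (1 - δ / ‖xbar‖ ^ 2)) * ‖xbar‖ := by
  have hray := Y.inner_apply_self_le_of_forall_hasEigenvalue_le hsym (c := lmax)
    fun μ hμ ↦
      have ⟨v, hv⟩ := hμ.exists_hasEigenvector
      hmax μ v hv.2 hv.apply_eq_smul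
  exact min_norm_sub_norm_add_le_of_pow_four_sub_le_sq_inner hnorm
    (pow_four_sub_le_sq_inner_of_norm_sub_le hclose (hray xbar) heig hnorm)

/-- an eigenvector for the top eigenvalue of a matrix close (in
operator norm) to `2x̄x̄ᵀ + (‖x̄‖² + ε̃)I`, normalized to `‖x̃‖ = ‖x̄‖`, is close
to `x̄` or to `−x̄`. -/
theorem stmt16 (n : ℕ) (xbar : EuclideanSpace ℝ (Fin n)) (hxbar : xbar ≠ 0)
    (εt : ℝ) (hεt : 0 ≤ εt) (δ : ℝ) (hδ0 : 0 ≤ δ) (hδ1 : δ ≤ ‖xbar‖ ^ 2)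
    (Y : EuclideanSpace ℝ (Fin n) →L[ℝ] EuclideanSpace ℝ (Fin n))
    (hsym : ∀ u v : EuclideanSpace ℝ (Fin n), ⟪Y u, v⟫ = ⟪u, Y v⟫)
    (hclose : ‖Y - ((2 : ℝ) • ((innerSL ℝ xbar).smulRight xbar)
        + (‖xbar‖ ^ 2 + εt) • ContinuousLinearMap.id ℝ (EuclideanSpace ℝ (Fin n)))‖ ≤ δ)
    (lmax : ℝ) (xt : EuclideanSpace ℝ (Fin n))
    (heig : Y xt = lmax • xt) (hnorm : ‖xt‖ = ‖xbar‖)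
    (hmax : ∀ (μ : ℝ) (v : EuclideanSpace ℝ (Fin n)), v ≠ 0 → Y v = μ • v → μ ≤ lmax) :
    min ‖xt - xbar‖ ‖xt + xbar‖ ≤
      Real.sqrt (2 - 2 * Real.sqrt (1 - δ / ‖xbar‖ ^ 2)) * ‖xbar‖ :=
  stmt16_general n xbar εt δ Y hsym hclose lmax xt heig hnorm hmax
end
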